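/- arXiv:2206.01005 — 2 statements merged into one kernel-verified Lean document; each statement's English description precedes it below -/
import Mathlib

section
/- In the ring of formal power series over a commutative ring M containing an invertible element L, for any integers a, a' ∈ ℤ and b, b' ∈ ℕ with b, b' ≥ 1, the Hadamard product of the two geometric series satisfies (Σ_{k≥1} L^{ak} T^{bk}) ∗ (Σ_{m≥1} L^{a'm} T^{b'm}) = Σ_{j≥1, b | j, b' | j} L^{(a·j/b + a'·j/b')} T^j, i.e. it equals Σ_{k≥1} L^{(a·lcm(b,b')/b + a'·lcm(b,b')/b')·k} T^{lcm(b,b')·k}. -/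
open PowerSeries

/-- The Hadamard product of two formal power series: coefficient-wise product. -/
noncomputable def hadamard {M : Type*} [CommRing M] (p q : PowerSeries M) : PowerSeries M :=
  PowerSeries.mk fun n => (PowerSeries.coeff n p) * (PowerSeries.coeff n q)

/-- The geometric series Σ_{k≥1} L^{ak} T^{bk}, i.e. the expansion of
`L^a T^b / (1 - L^a T^b)`. -/
noncomputable def geomSeries {M : Type*} [CommRing M] (L : Mˣ) (a : ℤ) (b : ℕ) :
    PowerSeries M :=
  PowerSeries.mk fun n => if b ∣ n ∧ n ≠ 0 then ((L ^ (a * ((n / b : ℕ) : ℤ)) : Mˣ) : M) else 0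

/-- The Hadamard product of `Σ_{k≥1} L^{ak} T^{bk}` and `Σ_{m≥1} L^{a'm} T^{b'm}` equals
`Σ_{k≥1} L^{(a·lcm(b,b')/b + a'·lcm(b,b')/b')·k} T^{lcm(b,b')·k}`. -/
theorem hadamard_geomSeries {M : Type*} [CommRing M] (L : Mˣ) (a a' : ℤ) (b b' : ℕ)
    (hb : 1 ≤ b) (hb' : 1 ≤ b') :
    hadamard (geomSeries L a b) (geomSeries L a' b') =
      geomSeries L (a * ((Nat.lcm b b' / b : ℕ) : ℤ) + a' * ((Nat.lcm b b' / b' : ℕ) : ℤ))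
        (Nat.lcm b b') := by
  ext n
  simp only [hadamard, geomSeries, coeff_mk]
  by_cases hn : n = 0
  · simp [hn]
  by_cases h : Nat.lcm b b' ∣ n
  · obtain ⟨k, rfl⟩ := h
    have hbl : b ∣ Nat.lcm b b' := Nat.dvd_lcm_left b b'
    have hbl' : b' ∣ Nat.lcm b b' := Nat.dvd_lcm_right b b'
    have hl : Nat.lcm b b' ≠ 0 := Nat.lcm_ne_zero (by omega) (by omega)
    rw [if_pos ⟨hbl.mul_right k, hn⟩, if_pos ⟨hbl'.mul_right k, hn⟩,
      if_pos ⟨dvd_mul_right _ _, hn⟩, ← Units.val_mul, ← zpow_add]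
    congr 2
    have e1 : Nat.lcm b b' * k / b = (Nat.lcm b b' / b) * k := by
      obtain ⟨m, hm⟩ := hbl
      rw [hm, Nat.mul_div_cancel_left _ (by omega), mul_assoc,
        Nat.mul_div_cancel_left _ (by omega)]
    have e2 : Nat.lcm b b' * k / b' = (Nat.lcm b b' / b') * k := by
      obtain ⟨m, hm⟩ := hbl'
      rw [hm, Nat.mul_div_cancel_left _ (by omega), mul_assoc,
        Nat.mul_div_cancel_left _ (by omega)]
    rw [Nat.mul_div_cancel_left _ (Nat.pos_of_ne_zero hl), e1, e2]
    push_cast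
    ring
  · have : ¬ b ∣ n ∨ ¬ b' ∣ n := by
      by_contra hc
      push_neg at hc
      exact h (Nat.lcm_dvd hc.1 hc.2)
    rw [if_neg (fun hc : _ ∧ _ => h hc.1)]
    rcases this with h1 | h1
    · rw [if_neg (fun hc : _ ∧ _ => h1 hc.1), zero_mul]
    · rw [if_neg (fun hc : _ ∧ _ => h1 hc.1), mul_zero]
end

section
/- Let R be a complete discrete valuation ring. The mixed power series ring R⟨x_1,…,x_m⟩[[y_1,…,y_{m'}]] (restricted power series in x over R, then formal power series in y) is canonically isomorphic as a topological R-algebra to R[[y_1,…,y_{m'}]]⟨x_1,…,x_m⟩ (formal power series in y, then restricted power series in x with respect to the ideal generated by ϖ and the y_j). -/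
/-!
Only finitely many `γ` have `|γ| < ℓ`, so the `(ϖ, y)`-adic condition at level `ℓ` is a finite
union of `ϖ`-adic conditions, one for each such `γ`. Conversely, the `(ϖ, y)`-adic condition at
level `ℓ + |γ| + 1`, read at the single exponent `γ`, gives the `ϖ`-adic condition at level `ℓ`.
-/

open Set

section
variable {R σ τ : Type*} [CommRing R] {I : Ideal R} {c : (σ →₀ ℕ) → (τ →₀ ℕ) → R}

theorem finite_setOf_exists_degree_lt_notMem_pow [Finite τ]
    (h : ∀ γ ℓ, {β | c β γ ∉ I ^ ℓ}.Finite) (ℓ : ℕ) :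
    {β | ∃ γ : τ →₀ ℕ, γ.degree < ℓ ∧ c β γ ∉ I ^ (ℓ - γ.degree)}.Finite := by
  refine ((Finsupp.finite_of_degree_lt ℓ).biUnion fun γ _ => h γ (ℓ - γ.degree)).subset ?_
  rintro β ⟨γ, hγ, hβ⟩
  exact mem_biUnion hγ hβ

theorem finite_setOf_notMem_pow_of_exists_degree_lt
    (h : ∀ ℓ, {β | ∃ γ : τ →₀ ℕ, γ.degree < ℓ ∧ c β γ ∉ I ^ (ℓ - γ.degree)}.Finite)
    (γ : τ →₀ ℕ) (ℓ : ℕ) :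
    {β | c β γ ∉ I ^ ℓ}.Finite :=
  (h (ℓ + γ.degree + 1)).subset fun _ hβ =>
    ⟨γ, by omega, fun hc => hβ (Ideal.pow_le_pow_right (by omega) hc)⟩

end

theorem mixedPowerSeries_comm_general {R : Type*} [CommRing R]
    (ϖ : R) (m m' : ℕ) :
    {f : MvPowerSeries (Fin m ⊕ Fin m') R |
        ∀ γ : Fin m' →₀ ℕ, ∀ ℓ : ℕ,
          {β : Fin m →₀ ℕ |
            MvPowerSeries.coeff (Finsupp.sumElim β γ) f ∉ Ideal.span {ϖ} ^ ℓ}.Finite} =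
      {f : MvPowerSeries (Fin m ⊕ Fin m') R |
        ∀ ℓ : ℕ,
          {β : Fin m →₀ ℕ | ∃ γ : Fin m' →₀ ℕ,
            (γ.sum fun _ e => e) < ℓ ∧
              MvPowerSeries.coeff (Finsupp.sumElim β γ) f ∉
                Ideal.span {ϖ} ^ (ℓ - γ.sum fun _ e => e)}.Finite} := by
  ext f
  -- `γ.sum fun _ e => e` unfolds to `Finsupp.degree γ`.
  exact ⟨finite_setOf_exists_degree_lt_notMem_pow, finite_setOf_notMem_pow_of_exists_degree_lt⟩

/-- Identifying both mixed power series rings `R⟨x⟩[[y]]` and `R[[y]]⟨x⟩` with subsets of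
the full power series ring `R[[x,y]]` via their coefficients, they coincide: a power
series `f = Σ a_{β,γ} x^β y^γ` lies in `R⟨x⟩[[y]]` (for each `y`-exponent `γ` the
`x`-coefficients tend ϖ-adically to `0`) if and only if it lies in `R[[y]]⟨x⟩` (the
`x`-coefficients, as elements of `R[[y]]`, tend to `0` for the `(ϖ, y)`-adic topology,
i.e. for each `ℓ` only finitely many `β` admit some `γ` with `|γ| < ℓ` and
`a_{β,γ} ∉ (ϖ)^{ℓ−|γ|}`). This is the canonical topological `R`-algebra isomorphism
`R⟨x⟩[[y]] ≅ R[[y]]⟨x⟩`. -/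
theorem mixedPowerSeries_comm {R : Type*} [CommRing R] [IsDomain R]
    [IsDiscreteValuationRing R] [IsAdicComplete (IsLocalRing.maximalIdeal R) R]
    (ϖ : R) (hϖ : Irreducible ϖ) (m m' : ℕ) :
    {f : MvPowerSeries (Fin m ⊕ Fin m') R |
        ∀ γ : Fin m' →₀ ℕ, ∀ ℓ : ℕ,
          {β : Fin m →₀ ℕ |
            MvPowerSeries.coeff (Finsupp.sumElim β γ) f ∉ Ideal.span {ϖ} ^ ℓ}.Finite} =
      {f : MvPowerSeries (Fin m ⊕ Fin m') R |
        ∀ ℓ : ℕ,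
          {β : Fin m →₀ ℕ | ∃ γ : Fin m' →₀ ℕ,
            (γ.sum fun _ e => e) < ℓ ∧
              MvPowerSeries.coeff (Finsupp.sumElim β γ) f ∉
                Ideal.span {ϖ} ^ (ℓ - γ.sum fun _ e => e)}.Finite} :=
  mixedPowerSeries_comm_general ϖ m m'
end
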